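/- For any subset A of a topological space X, the e*-θ-kernel of A satisfies e*-ker_θ(A) = {x ∈ X : e*-cl_θ({x}) ∩ A ≠ ∅}. -/

import Mathlib

/-!
A point `x` lies in the e*-θ-kernel of `A` exactly when every e*-θ-closed set containing `x` meets
`A`. Since e*-cl_θ is monotone and idempotent, e*-cl_θ {x} is the smallest e*-θ-closed set
containing `x`, so it suffices to test that one set. Idempotence rests on the fact that the
e*-closure of an e*-open set is again e*-open.
-/

open Set Topology

variable {X : Type*} [TopologicalSpace X]

/-- δ-closure of A. -/
def deltaCl (A : Set X) : Set X :=
  {x | ∀ U : Set X, IsOpen U → x ∈ U → (interior (closure U) ∩ A).Nonempty}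

/-- A is e*-open if A ⊆ cl(int(δ-cl A)). -/
def EStarOpen (A : Set X) : Prop := A ⊆ closure (interior (deltaCl A))

/-- A is e*-closed if its complement is e*-open. -/
def EStarClosed (A : Set X) : Prop := EStarOpen Aᶜ

/-- e*-closure: intersection of all e*-closed supersets. -/
def eStarCl (A : Set X) : Set X := ⋂₀ {F | EStarClosed F ∧ A ⊆ F}

/-- e*-interior: union of all e*-open subsets. -/
def eStarInt (A : Set X) : Set X := ⋃₀ {U | EStarOpen U ∧ U ⊆ A}

/-- e*-regular: both e*-open and e*-closed. -/
def EStarRegular (A : Set X) : Prop := EStarOpen A ∧ EStarClosed A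

/-- e*-θ-closure. -/
def eStarClTheta (A : Set X) : Set X :=
  {x | ∀ U : Set X, EStarOpen U → x ∈ U → (eStarCl U ∩ A).Nonempty}

/-- e*-θ-closed. -/
def EStarThetaClosed (A : Set X) : Prop := A = eStarClTheta A

/-- e*-θ-open. -/
def EStarThetaOpen (A : Set X) : Prop := EStarThetaClosed Aᶜ

/-- quasi e*-θ-closed. -/
def QEStarThetaClosed (A : Set X) : Prop :=
  ∀ U : Set X, EStarThetaOpen U → A ⊆ U → eStarClTheta A ⊆ U

/-- e*-θ-kernel. -/
def eStarKerTheta (A : Set X) : Set X := ⋂₀ {U | EStarThetaOpen U ∧ A ⊆ U}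

lemma deltaCl_mono {A B : Set X} (h : A ⊆ B) : deltaCl A ⊆ deltaCl B :=
  fun _ hx U hU hxU => (hx U hU hxU).mono (inter_subset_inter_right _ h)

lemma subset_deltaCl (A : Set X) : A ⊆ deltaCl A :=
  fun x hx _ hU hxU => ⟨x, interior_maximal subset_closure hU hxU, hx⟩

lemma IsOpen.eStarOpen {U : Set X} (hU : IsOpen U) : EStarOpen U :=
  fun _ hx => subset_closure (interior_maximal (subset_deltaCl U) hU hx)

lemma IsClosed.eStarClosed {F : Set X} (hF : IsClosed F) : EStarClosed F :=
  hF.isOpen_compl.eStarOpen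

lemma eStarOpen_sUnion {S : Set (Set X)} (h : ∀ U ∈ S, EStarOpen U) : EStarOpen (⋃₀ S) := by
  rintro x ⟨U, hUS, hxU⟩
  exact closure_mono (interior_mono (deltaCl_mono (subset_sUnion_of_mem hUS))) (h U hUS hxU)

lemma eStarClosed_eStarCl (A : Set X) : EStarClosed (eStarCl A) := by
  rw [EStarClosed, eStarCl, compl_sInter]
  apply eStarOpen_sUnion
  rintro _ ⟨F, ⟨hF, -⟩, rfl⟩
  exact hF

lemma subset_eStarCl (A : Set X) : A ⊆ eStarCl A :=
  fun _ hx _ hF => hF.2 hx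

lemma eStarCl_minimal {A F : Set X} (h : A ⊆ F) (hF : EStarClosed F) : eStarCl A ⊆ F :=
  fun _ hx => hx F ⟨hF, h⟩

lemma eStarCl_eStarCl (A : Set X) : eStarCl (eStarCl A) = eStarCl A :=
  (eStarCl_minimal Subset.rfl (eStarClosed_eStarCl A)).antisymm (subset_eStarCl _)

lemma EStarOpen.eStarOpen_eStarCl {U : Set X} (hU : EStarOpen U) : EStarOpen (eStarCl U) := by
  have hcl : eStarCl U ⊆ closure (interior (deltaCl U)) :=
    eStarCl_minimal hU isClosed_closure.eStarClosed
  exact hcl.trans (closure_mono (interior_mono (deltaCl_mono (subset_eStarCl U))))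

lemma subset_eStarClTheta (B : Set X) : B ⊆ eStarClTheta B :=
  fun x hx U _ hxU => ⟨x, subset_eStarCl U hxU, hx⟩

lemma eStarClTheta_mono {B C : Set X} (h : B ⊆ C) : eStarClTheta B ⊆ eStarClTheta C :=
  fun _ hx U hU hxU => (hx U hU hxU).mono (inter_subset_inter_right _ h)

lemma eStarClTheta_eStarClTheta (B : Set X) : eStarClTheta (eStarClTheta B) = eStarClTheta B := by
  refine Subset.antisymm (fun y hy U hU hyU => ?_) (subset_eStarClTheta _)
  -- Test with `eStarCl U`, which is e*-open and equal to its own e*-closure.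
  have hR : EStarOpen (eStarCl U) := hU.eStarOpen_eStarCl
  obtain ⟨z, hzU, hzB⟩ := hy _ hR (subset_eStarCl U hyU)
  rw [eStarCl_eStarCl] at hzU
  simpa only [eStarCl_eStarCl] using hzB _ hR hzU

lemma eStarThetaClosed_eStarClTheta (B : Set X) : EStarThetaClosed (eStarClTheta B) :=
  (eStarClTheta_eStarClTheta B).symm

lemma EStarThetaClosed.eStarClTheta_subset {B F : Set X} (hF : EStarThetaClosed F) (h : B ⊆ F) :
    eStarClTheta B ⊆ F :=
  hF ▸ eStarClTheta_mono h

lemma mem_eStarKerTheta_iff {A : Set X} {x : X} :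
    x ∈ eStarKerTheta A ↔ ∀ F, EStarThetaClosed F → x ∈ F → (F ∩ A).Nonempty := by
  constructor
  · intro hx F hF hxF
    by_contra hFA
    have hAF : A ⊆ Fᶜ := fun a ha haF => hFA ⟨a, haF, ha⟩
    exact hx Fᶜ ⟨by rwa [EStarThetaOpen, compl_compl], hAF⟩ hxF
  · rintro hx U ⟨hU, hAU⟩
    by_contra hxU
    obtain ⟨a, haU, haA⟩ := hx Uᶜ hU hxU
    exact haU (hAU haA)

theorem stmt17 (A : Set X) :
    eStarKerTheta A = {x : X | (eStarClTheta {x} ∩ A).Nonempty} := by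
  ext x
  rw [mem_eStarKerTheta_iff]
  constructor
  · exact fun hx => hx _ (eStarThetaClosed_eStarClTheta _) (subset_eStarClTheta _ rfl)
  · rintro ⟨a, hax, haA⟩ F hF hxF
    exact ⟨a, hF.eStarClTheta_subset (singleton_subset_iff.mpr hxF) hax, haA⟩
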